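/- Let char F = 2 and 1 ≤ k ≤ n. Then W̄^sp_k ⊆ W_k°, i.e. the span of the decomposable vectors of totally isotropic k-subspaces of (V̄, ς), regarded inside ⋀^k V via the inclusion V̄ ⊆ V, is contained in the span of the decomposable vectors of totally singular k-subspaces of (V, η). -/

import Mathlib

open ExteriorAlgebra

noncomputable section

/-- The quadratic form `η(x) = Σ_{i=1}^n x_i x_{n+i} + x_{2n+1}²` on `F^{2n+1}`
(indices written 0-based). -/
def eta (F : Type) [Field F] (n : ℕ) (x : Fin (2 * n + 1) → F) : F :=
  (∑ i : Fin n, x ⟨i.1, by have := i.2; omega⟩ * x ⟨n + i.1, by have := i.2; omega⟩)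
    + x ⟨2 * n, by omega⟩ ^ 2

/-- `W_k°`: the span of the decomposable vectors `v_1 ∧ ⋯ ∧ v_k` where `v_1, …, v_k` is a
basis of a totally singular `k`-dimensional subspace of `F^{2n+1}`. -/
def Wcirc (F : Type) [Field F] (n k : ℕ) :
    Submodule F (ExteriorAlgebra F (Fin (2 * n + 1) → F)) :=
  Submodule.span F {w | ∃ v : Fin k → (Fin (2 * n + 1) → F),
    LinearIndependent F v ∧
    (∀ x ∈ Submodule.span F (Set.range v), eta F n x = 0) ∧
    w = ExteriorAlgebra.ιMulti F k v}

/-- The alternating form `ς(x,y) = Σ_{i=1}^n (x_i y_{n+i} − x_{n+i} y_i)` on `F^{2n}`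
(indices written 0-based). -/
def zeta (F : Type) [Field F] (n : ℕ) (x y : Fin (2 * n) → F) : F :=
  ∑ i : Fin n, (x ⟨i.1, by have := i.2; omega⟩ * y ⟨n + i.1, by have := i.2; omega⟩
    - x ⟨n + i.1, by have := i.2; omega⟩ * y ⟨i.1, by have := i.2; omega⟩)

/-- `W̄^sp_j`: the span of the decomposable vectors `v_1 ∧ ⋯ ∧ v_j` where `v_1, …, v_j` is a
basis of a totally isotropic `j`-dimensional subspace of `F^{2n}`. -/
def Wsp (F : Type) [Field F] (n j : ℕ) :
    Submodule F (ExteriorAlgebra F (Fin (2 * n) → F)) :=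
  Submodule.span F {w | ∃ v : Fin j → (Fin (2 * n) → F),
    LinearIndependent F v ∧
    (∀ x ∈ Submodule.span F (Set.range v), ∀ y ∈ Submodule.span F (Set.range v),
      zeta F n x y = 0) ∧
    w = ExteriorAlgebra.ιMulti F j v}

/-- The inclusion `V̄ = F^{2n} ↪ V = F^{2n+1}` (extension by zero on the last coordinate). -/
def incl (F : Type) [Field F] (n : ℕ) : (Fin (2 * n) → F) →ₗ[F] (Fin (2 * n + 1) → F) :=
  Function.ExtendByZero.linearMap F (Fin.castLE (by omega))

/-!
In characteristic 2, `ς` is the polar form of `q̄(x) = Σ xᵢ x_{n+i}`, and `η` restricts to `q̄`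
on `V̄`; so it suffices to write the wedge of a `ς`-isotropic family `v₁, …, v_k` as a combination
of wedges of `q̄`-singular families. Starting from the coordinate Lagrangian `{x₁ = ⋯ = xₙ = 0}`
and exchanging one vector at a time, one finds a totally singular `M = M^⊥` meeting `span v`
trivially. Pairing with the `vᵢ` maps `M` onto `F^k`, which gives singular, mutually orthogonal
`z_j ∈ M` with `polar(vᵢ, z_j) = δᵢⱼ`. Then `vᵢ = (vᵢ - q̄(vᵢ) zᵢ) + q̄(vᵢ) zᵢ` splits `vᵢ` into two
singular vectors orthogonal to all summands of the other `v_j`, and multilinear expansion writes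
`v₁ ∧ ⋯ ∧ v_k` as a sum of wedges of totally singular families (the dependent ones vanish).
-/

open QuadraticMap

section

open Submodule

variable {K V W : Type*} [Field K] [AddCommGroup V] [Module K V] [AddCommGroup W] [Module K W]

def singularWedges (q : V → K) (k : ℕ) : Submodule K (ExteriorAlgebra K V) :=
  span K {w | ∃ v : Fin k → V, LinearIndependent K v ∧
    (∀ x ∈ span K (Set.range v), q x = 0) ∧ w = ιMulti K k v}

def isotropicWedges (B : V →ₗ[K] V →ₗ[K] K) (k : ℕ) : Submodule K (ExteriorAlgebra K V) :=
  span K {w | ∃ v : Fin k → V, LinearIndependent K v ∧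
    (∀ x ∈ span K (Set.range v), ∀ y ∈ span K (Set.range v), B x y = 0) ∧ w = ιMulti K k v}

theorem ιMulti_mem_singularWedges {q : V → K} {k : ℕ} (v : Fin k → V)
    (hv : ∀ x ∈ span K (Set.range v), q x = 0) : ιMulti K k v ∈ singularWedges q k := by
  by_cases hli : LinearIndependent K v
  · exact subset_span ⟨v, hli, hv, rfl⟩
  · rw [AlternatingMap.map_linearDependent _ v hli]
    exact zero_mem _

theorem map_singularWedges_le {q : V → K} {q' : W → K} (f : V →ₗ[K] W)
    (hf : ∀ x, q' (f x) = q x) (k : ℕ) :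
    (singularWedges q k).map (ExteriorAlgebra.map f).toLinearMap ≤ singularWedges q' k := by
  rw [singularWedges, map_span_le]
  rintro _ ⟨v, -, hv, rfl⟩
  rw [AlgHom.toLinearMap_apply, map_apply_ιMulti]
  refine ιMulti_mem_singularWedges _ fun x hx => ?_
  rw [Set.range_comp, span_image] at hx
  obtain ⟨y, hy, rfl⟩ := hx
  rw [hf, hv y hy]

theorem Submodule.mem_span_singleton_sup {a x : V} {N : Submodule K V} :
    x ∈ K ∙ a ⊔ N ↔ ∃ c : K, ∃ m ∈ N, x = c • a + m := by
  rw [← N.span_eq, ← span_insert, mem_span_insert, N.span_eq]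

namespace QuadraticMap

variable {Q : QuadraticForm K V}

theorem polar_eq_zero_of_mem_span {s : Set V} (h : ∀ x ∈ s, ∀ y ∈ s, polar Q x y = 0) {x y : V}
    (hx : x ∈ span K s) (hy : y ∈ span K s) : polar Q x y = 0 := by
  have hs : ∀ x ∈ s, span K s ≤ LinearMap.ker (polarBilin Q x) :=
    fun x hx => span_le.2 fun y hy => by simpa using h x hx y hy
  simpa using (span_le.2 fun x hx => hs x hx hy :
    span K s ≤ LinearMap.ker ((polarBilin Q).flip y)) hx

theorem map_eq_zero_of_mem_span {s : Set V} (h₀ : ∀ x ∈ s, Q x = 0)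
    (h₁ : ∀ x ∈ s, ∀ y ∈ s, polar Q x y = 0) {x : V} (hx : x ∈ span K s) : Q x = 0 := by
  induction hx using span_induction with
  | mem x hx => exact h₀ x hx
  | zero => exact Q.map_zero
  | add x y hx hy hQx hQy =>
    rw [QuadraticMap.map_add (⇑Q), hQx, hQy, polar_eq_zero_of_mem_span h₁ hx hy, add_zero,
      add_zero]
  | smul a x _ hQx => rw [Q.map_smul, hQx, smul_zero]

variable (Q) in
structure IsLagrangian (M : Submodule K V) : Prop where
  map_eq_zero : ∀ x ∈ M, Q x = 0
  mem_of_polar_eq_zero : ∀ x, (∀ m ∈ M, polar Q m x = 0) → x ∈ M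

theorem IsLagrangian.polar_eq_zero {M : Submodule K V} (hM : IsLagrangian Q M) {x y : V}
    (hx : x ∈ M) (hy : y ∈ M) : polar Q x y = 0 := by
  rw [polar, hM.map_eq_zero _ (M.add_mem hx hy), hM.map_eq_zero x hx, hM.map_eq_zero y hy,
    sub_zero, sub_zero]

theorem exists_map_eq_zero_polar_eq_one (hQ : (polarBilin Q).SeparatingLeft) {v : V}
    (hv : Q v = 0) (hv₀ : v ≠ 0) : ∃ a, Q a = 0 ∧ polar Q a v = 1 := by
  obtain ⟨x, hx⟩ : ∃ x, polar Q x v ≠ 0 := by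
    by_contra! h
    exact hv₀ (hQ v fun x => by rw [polarBilin_apply_apply, polar_comm, h x])
  obtain ⟨x', hx'⟩ : ∃ x', polar Q x' v = 1 :=
    ⟨(polar Q x v)⁻¹ • x, by rw [polar_smul_left, smul_eq_mul, inv_mul_cancel₀ hx]⟩
  -- `Q (x' + t • v) = Q x' + t` because `v` is singular
  refine ⟨x' + (-Q x') • v, ?_, ?_⟩
  · rw [QuadraticMap.map_add (⇑Q), Q.map_smul, polar_smul_right, hv, hx']
    simp
  · rw [polar_add_left, polar_smul_left, polar_self, hv, hx']
    simp

variable {M : Submodule K V} {a v : V}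

theorem IsLagrangian.exchange (hM : IsLagrangian Q M) (hvM : v ∈ M) (ha : Q a = 0)
    (hav : polar Q a v = 1) :
    IsLagrangian Q (K ∙ a ⊔ M ⊓ LinearMap.ker (polarBilin Q a)) := by
  have haM : a ∈ K ∙ a ⊔ M ⊓ LinearMap.ker (polarBilin Q a) :=
    mem_sup_left (mem_span_singleton_self a)
  constructor
  · intro x hx
    obtain ⟨c, m, ⟨hmM, hma⟩, rfl⟩ := mem_span_singleton_sup.1 hx
    rw [SetLike.mem_coe, LinearMap.mem_ker, polarBilin_apply_apply] at hma
    rw [QuadraticMap.map_add (⇑Q), Q.map_smul, polar_smul_left, ha, hma, hM.map_eq_zero m hmM]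
    simp
  · intro x hx
    set c := polar Q v x
    have hxM : x - c • a ∈ M := by
      refine hM.mem_of_polar_eq_zero _ fun m hm => ?_
      set d := polar Q a m
      have hmd : m - d • v ∈ M ⊓ LinearMap.ker (polarBilin Q a) := by
        refine ⟨M.sub_mem hm (M.smul_mem d hvM), ?_⟩
        rw [SetLike.mem_coe, LinearMap.mem_ker, polarBilin_apply_apply, polar_sub_right,
          polar_smul_right, hav, smul_eq_mul, mul_one, sub_self]
      have h₁ := hx _ (mem_sup_right hmd)
      have h₂ : polar Q (m - d • v) a = 0 := by
        rw [polar_comm]; simpa [polarBilin_apply_apply] using hmd.2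
      calc polar Q m (x - c • a)
          = polar Q (m - d • v) x - c * polar Q (m - d • v) a
            + d * (polar Q v x - c * polar Q a v) := by
            simp only [polar_sub_left, polar_sub_right, polar_smul_left, polar_smul_right,
              smul_eq_mul, polar_comm Q v a]
            ring
        _ = 0 := by rw [h₁, h₂, hav]; ring
    have hxa : x - c • a ∈ LinearMap.ker (polarBilin Q a) := by
      rw [LinearMap.mem_ker, polarBilin_apply_apply, polar_sub_right, polar_smul_right,
        polar_self, ha, hx a haM]
      simp
    simpa using add_mem (mem_sup_right (mem_inf.2 ⟨hxM, hxa⟩)) (smul_mem _ c haM)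

theorem IsLagrangian.disjoint_exchange (hM : IsLagrangian Q M) {U : Submodule K V}
    (hMU : Disjoint M U) (hvM : v ∈ M) (hav : polar Q a v = 1)
    (hU : ∀ x ∈ K ∙ v ⊔ U, ∀ y ∈ K ∙ v ⊔ U, polar Q x y = 0) :
    Disjoint (K ∙ a ⊔ M ⊓ LinearMap.ker (polarBilin Q a)) (K ∙ v ⊔ U) := by
  have hv : v ∈ K ∙ v ⊔ U := mem_sup_left (mem_span_singleton_self v)
  rw [disjoint_def]
  intro x hx hxU
  obtain ⟨c, m, ⟨hmM, hma⟩, rfl⟩ := mem_span_singleton_sup.1 hx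
  rw [SetLike.mem_coe, LinearMap.mem_ker, polarBilin_apply_apply] at hma
  obtain rfl : c = 0 := by
    have := hU v hv _ hxU
    rwa [polar_add_right, polar_smul_right, polar_comm, hav, hM.polar_eq_zero hvM hmM,
      smul_eq_mul, mul_one, add_zero] at this
  rw [zero_smul, zero_add] at hxU ⊢
  obtain ⟨b, u, hu, rfl⟩ := mem_span_singleton_sup.1 hxU
  obtain rfl : u = 0 := disjoint_def.1 hMU u (by simpa using M.sub_mem hmM (M.smul_mem b hvM)) hu
  rw [add_zero, polar_smul_right, hav, smul_eq_mul, mul_one] at hma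
  rw [hma, zero_smul, add_zero]

theorem IsLagrangian.exists_disjoint_span (hQ : (polarBilin Q).SeparatingLeft)
    (hM : IsLagrangian Q M) (s : Finset V) (hs : ∀ x ∈ s, ∀ y ∈ s, polar Q x y = 0) :
    ∃ M', IsLagrangian Q M' ∧ Disjoint M' (span K (s : Set V)) := by
  classical
  induction s using Finset.induction_on with
  | empty => exact ⟨M, hM, by simp⟩
  | insert u t _ ih =>
    obtain ⟨L, hL, hLt⟩ := ih fun x hx y hy =>
      hs x (Finset.mem_insert_of_mem hx) y (Finset.mem_insert_of_mem hy)
    by_cases hdisj : Disjoint L (span K ↑(insert u t))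
    · exact ⟨L, hL, hdisj⟩
    obtain ⟨v, hvL, hv, hv₀⟩ : ∃ v ∈ L, v ∈ span K ↑(insert u t) ∧ v ≠ 0 := by
      simpa [disjoint_def] using hdisj
    have hvt : v ∉ span K (t : Set V) := fun h => hv₀ (disjoint_def.1 hLt v hvL h)
    have hspan : span K ↑(insert u t) = K ∙ v ⊔ span K ↑t := by
      rw [Finset.coe_insert] at hv ⊢
      rw [← span_insert]
      apply le_antisymm <;> refine span_le.2 (Set.insert_subset ?_ ?_)
      · exact mem_span_insert_exchange hv hvt
      · exact (Set.subset_insert _ _).trans subset_span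
      · exact hv
      · exact (Set.subset_insert _ _).trans subset_span
    obtain ⟨a, ha, hav⟩ := exists_map_eq_zero_polar_eq_one hQ (hL.map_eq_zero v hvL) hv₀
    refine ⟨_, hL.exchange hvL ha hav, hspan ▸ hL.disjoint_exchange hLt hvL hav ?_⟩
    rw [← hspan]
    exact fun x hx y hy => polar_eq_zero_of_mem_span hs hx hy

theorem IsLagrangian.exists_dual {ι : Type*} [Fintype ι] [DecidableEq ι]
    (hM : IsLagrangian Q M) {v : ι → V} (hv : LinearIndependent K v)
    (hMv : Disjoint M (span K (Set.range v))) :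
    ∃ z : ι → V, (∀ j, z j ∈ M) ∧ ∀ i j, polar Q (v i) (z j) = if i = j then 1 else 0 := by
  let Φ : M →ₗ[K] ι → K := LinearMap.pi fun i => (polarBilin Q (v i)).domRestrict M
  -- a functional killing the range of `Φ` gives some `∑ cᵢ • vᵢ` orthogonal to `M`, hence in `M`
  have hΦ : Function.Surjective Φ := by
    rw [← LinearMap.dualMap_injective_iff, injective_iff_map_eq_zero]
    intro φ hφ
    set c : ι → K := fun i => φ fun j => if i = j then 1 else 0
    have hu : ∑ i, c i • v i ∈ M := by
      refine hM.mem_of_polar_eq_zero _ fun m hm => ?_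
      have := LinearMap.congr_fun hφ ⟨m, hm⟩
      rw [LinearMap.dualMap_apply, LinearMap.pi_apply_eq_sum_univ] at this
      calc polar Q m (∑ i, c i • v i) = ∑ i, polar Q (v i) m * c i := by
            simp [← polarBilin_apply_apply, polar_comm Q m, mul_comm]
        _ = 0 := by simpa [Φ, c] using this
    have hc := Fintype.linearIndependent_iff.1 hv c <| disjoint_def.1 hMv _ hu <|
      sum_mem fun i _ => smul_mem _ _ (subset_span ⟨i, rfl⟩)
    exact LinearMap.ext fun x => by simp [LinearMap.pi_apply_eq_sum_univ φ x, c, hc]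
  choose z hz using fun j => hΦ (Pi.single j 1)
  refine ⟨fun j => z j, fun j => (z j).2, fun i j => ?_⟩
  simpa [Φ, Pi.single_apply, eq_comm] using congrFun (hz j) i

theorem ιMulti_mem_singularWedges_of_dual {k : ℕ} {v z : Fin k → V}
    (hv : ∀ i j, polar Q (v i) (v j) = 0) (hz : ∀ j, Q (z j) = 0)
    (hzz : ∀ i j, polar Q (z i) (z j) = 0)
    (hvz : ∀ i j, polar Q (v i) (z j) = if i = j then 1 else 0) :
    ιMulti K k v ∈ singularWedges Q k := by
  classical
  set A : Fin k → V := fun i => v i - Q (v i) • z i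
  set C : Fin k → V := fun i => Q (v i) • z i
  have hsplit : v = A + C := by ext i; simp [A, C]
  have hA : ∀ i, Q (A i) = 0 := fun i => by
    simp [A, sub_eq_add_neg, QuadraticMap.map_add (⇑Q), QuadraticMap.map_smul, hz, hvz]
  have hC : ∀ i, Q (C i) = 0 := fun i => by simp [C, QuadraticMap.map_smul, hz]
  rw [hsplit, AlternatingMap.map_add_univ]
  refine sum_mem fun s _ => ιMulti_mem_singularWedges _ fun x hx =>
    map_eq_zero_of_mem_span ?_ ?_ hx
  · rintro _ ⟨i, rfl⟩
    by_cases hi : i ∈ s <;> simp [hi, hA, hC]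
  · rintro _ ⟨i, rfl⟩ _ ⟨j, rfl⟩
    rcases eq_or_ne i j with rfl | hij
    · by_cases hi : i ∈ s <;> simp [hi, polar_self, hA, hC]
    · by_cases hi : i ∈ s <;> by_cases hj : j ∈ s <;>
        simp [hi, hj, A, C, polar_sub_left, polar_sub_right, polar_smul_left, polar_smul_right,
          hv, hzz, hvz, polar_comm Q (z _) (v _), hij, hij.symm]

theorem isotropicWedges_polarBilin_le_singularWedges (hQ : (polarBilin Q).SeparatingLeft)
    {M : Submodule K V} (hM : IsLagrangian Q M) (k : ℕ) :
    isotropicWedges (polarBilin Q) k ≤ singularWedges Q k := by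
  classical
  rw [isotropicWedges, span_le]
  rintro _ ⟨v, hli, hiso, rfl⟩
  have hv : ∀ i j, polar Q (v i) (v j) = 0 := fun i j => by
    simpa using hiso _ (subset_span ⟨i, rfl⟩) _ (subset_span ⟨j, rfl⟩)
  obtain ⟨M', hM', hdisj⟩ := hM.exists_disjoint_span hQ (Finset.univ.image v) (by simp [hv])
  rw [Finset.coe_image, Finset.coe_univ, Set.image_univ] at hdisj
  obtain ⟨z, hzM, hvz⟩ := hM'.exists_dual hli hdisj
  exact ιMulti_mem_singularWedges_of_dual hv (fun j => hM'.map_eq_zero _ (hzM j))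
    (fun i j => hM'.polar_eq_zero (hzM i) (hzM j)) hvz

end QuadraticMap

end

section

variable {F : Type} [Field F] {n : ℕ}

def leftIdx (i : Fin n) : Fin (2 * n) := ⟨i, by omega⟩

def rightIdx (i : Fin n) : Fin (2 * n) := ⟨n + i, by omega⟩

@[simp] theorem leftIdx_inj {i j : Fin n} : leftIdx i = leftIdx j ↔ i = j := by
  simp [leftIdx, Fin.ext_iff]

@[simp] theorem rightIdx_inj {i j : Fin n} : rightIdx i = rightIdx j ↔ i = j := by
  simp [rightIdx, Fin.ext_iff]

@[simp] theorem leftIdx_ne_rightIdx (i j : Fin n) : leftIdx i ≠ rightIdx j := by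
  simp [leftIdx, rightIdx, Fin.ext_iff]; omega

@[simp] theorem rightIdx_ne_leftIdx (i j : Fin n) : rightIdx i ≠ leftIdx j :=
  (leftIdx_ne_rightIdx j i).symm

theorem exists_leftIdx_or_rightIdx (j : Fin (2 * n)) :
    (∃ i, leftIdx i = j) ∨ ∃ i, rightIdx i = j := by
  by_cases hj : j.1 < n
  · exact Or.inl ⟨⟨j, hj⟩, rfl⟩
  · exact Or.inr ⟨⟨j - n, by omega⟩, Fin.ext (by simp [rightIdx]; omega)⟩

variable (F n) in
def hyperbolicPairing : LinearMap.BilinForm F (Fin (2 * n) → F) :=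
  ∑ i : Fin n,
    (LinearMap.mul F F).compl₁₂ (LinearMap.proj (leftIdx i)) (LinearMap.proj (rightIdx i))

variable (F n) in
def hyperbolicForm : QuadraticForm F (Fin (2 * n) → F) :=
  (hyperbolicPairing F n).toQuadraticMap

theorem hyperbolicForm_apply (x : Fin (2 * n) → F) :
    hyperbolicForm F n x = ∑ i, x (leftIdx i) * x (rightIdx i) := by
  simp [hyperbolicForm, hyperbolicPairing]

theorem polar_hyperbolicForm (x y : Fin (2 * n) → F) :
    polar (hyperbolicForm F n) x y =
      ∑ i, (x (leftIdx i) * y (rightIdx i) + y (leftIdx i) * x (rightIdx i)) := by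
  rw [hyperbolicForm, LinearMap.BilinMap.polar_toQuadraticMap]
  simp [hyperbolicPairing, Finset.sum_add_distrib]

theorem polar_hyperbolicForm_eq_zeta [CharP F 2] (x y : Fin (2 * n) → F) :
    polar (hyperbolicForm F n) x y = zeta F n x y := by
  rw [polar_hyperbolicForm, zeta]
  exact Finset.sum_congr rfl fun i _ => by simp only [leftIdx, rightIdx, CharTwo.sub_eq_add]; ring

theorem polar_hyperbolicForm_single_leftIdx (i : Fin n) (x : Fin (2 * n) → F) :
    polar (hyperbolicForm F n) (Pi.single (leftIdx i) 1) x = x (rightIdx i) := by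
  simp [polar_hyperbolicForm, Pi.single_apply]

theorem polar_hyperbolicForm_single_rightIdx (i : Fin n) (x : Fin (2 * n) → F) :
    polar (hyperbolicForm F n) (Pi.single (rightIdx i) 1) x = x (leftIdx i) := by
  simp [polar_hyperbolicForm, Pi.single_apply]

theorem separatingLeft_polarBilin_hyperbolicForm :
    (polarBilin (hyperbolicForm F n)).SeparatingLeft := by
  intro x hx
  funext j
  rcases exists_leftIdx_or_rightIdx j with ⟨i, rfl⟩ | ⟨i, rfl⟩
  · simpa [polar_comm _ x, polar_hyperbolicForm_single_rightIdx] using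
      hx (Pi.single (rightIdx i) 1)
  · simpa [polar_comm _ x, polar_hyperbolicForm_single_leftIdx] using
      hx (Pi.single (leftIdx i) 1)

theorem isLagrangian_hyperbolicForm :
    IsLagrangian (hyperbolicForm F n) (⨅ i, LinearMap.ker (LinearMap.proj (leftIdx i))) where
  map_eq_zero x hx := by
    simp_all [hyperbolicForm_apply]
  mem_of_polar_eq_zero x hx := by
    simp only [Submodule.mem_iInf, LinearMap.mem_ker, LinearMap.proj_apply] at hx ⊢
    intro i
    simpa [polar_hyperbolicForm_single_rightIdx] using hx (Pi.single (rightIdx i) 1) (by simp)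

theorem Wsp_eq_isotropicWedges [CharP F 2] (k : ℕ) :
    Wsp F n k = isotropicWedges (polarBilin (hyperbolicForm F n)) k := by
  simp only [Wsp, isotropicWedges, polarBilin_apply_apply, polar_hyperbolicForm_eq_zeta]

theorem incl_apply_castLE (x : Fin (2 * n) → F) (j : Fin (2 * n)) :
    incl F n x (Fin.castLE (by omega) j) = x j :=
  (Fin.castLE_injective _).extend_apply x 0 j

theorem incl_apply_last (x : Fin (2 * n) → F) : incl F n x ⟨2 * n, by omega⟩ = 0 :=
  Function.extend_apply' _ _ _ fun ⟨j, hj⟩ => by simp [Fin.ext_iff] at hj; omega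

theorem eta_incl (x : Fin (2 * n) → F) : eta F n (incl F n x) = hyperbolicForm F n x := by
  unfold eta
  rw [incl_apply_last, hyperbolicForm_apply, zero_pow two_ne_zero, add_zero]
  exact Finset.sum_congr rfl fun i _ => by
    rw [← incl_apply_castLE x (leftIdx i), ← incl_apply_castLE x (rightIdx i)]
    rfl

end

theorem stmt3_general (F : Type) [Field F] [CharP F 2] (n k : ℕ) :
    Submodule.map (ExteriorAlgebra.map (incl F n)).toLinearMap (Wsp F n k) ≤ Wcirc F n k :=
  calc (Wsp F n k).map (ExteriorAlgebra.map (incl F n)).toLinearMap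
      = (isotropicWedges (polarBilin (hyperbolicForm F n)) k).map
          (ExteriorAlgebra.map (incl F n)).toLinearMap := by rw [Wsp_eq_isotropicWedges]
    _ ≤ (singularWedges (hyperbolicForm F n) k).map (ExteriorAlgebra.map (incl F n)).toLinearMap :=
      Submodule.map_mono (isotropicWedges_polarBilin_le_singularWedges
        separatingLeft_polarBilin_hyperbolicForm isLagrangian_hyperbolicForm k)
    _ ≤ singularWedges (eta F n) k := map_singularWedges_le (incl F n) eta_incl k
    _ = Wcirc F n k := rfl

/-- If `char F = 2` and `1 ≤ k ≤ n`, then `W̄^sp_k ⊆ W_k°`, where `W̄^sp_k` is regarded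
inside `⋀^k V` via the inclusion `V̄ ⊆ V`. -/
theorem stmt3 (F : Type) [Field F] [CharP F 2] (n k : ℕ) (hk : 1 ≤ k) (hkn : k ≤ n) :
    Submodule.map (ExteriorAlgebra.map (incl F n)).toLinearMap (Wsp F n k) ≤ Wcirc F n k :=
  stmt3_general F n k
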